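/- In Ãₙ with gⱼ = pⱼ⁻¹p_{j+1}: (i) a_k gⱼ = gⱼ a_k whenever k ∉ {j−1, j, j+1} (mod n+1); (ii) a_{i−1} gᵢ = g_{i−1} gᵢ a_{i−1}; (iii) aᵢ gᵢ = gᵢ⁻¹ aᵢ; (iv) a_{i+1} gᵢ = gᵢ g_{i+1} a_{i+1}, all indices mod n+1. -/

import Mathlib

open CoxeterMatrix

/-- The affine Coxeter matrix of type Ãₙ on the cyclic index set `ZMod (n+1)`:
`aᵢ² = 1`, `(aᵢa_{i+1})³ = 1`, and non-adjacent generators (mod n+1) commute. -/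
def affineA (n : ℕ) : CoxeterMatrix (ZMod (n + 1)) where
  M := fun i j => if i = j then 1 else if i = j + 1 ∨ j = i + 1 then 3 else 2
  isSymm := by
    ext i j
    by_cases h : i = j
    · simp [Matrix.transpose, h]
    · simp only [Matrix.transpose, Matrix.of_apply]
      rw [if_neg h, if_neg (Ne.symm h)]
      exact if_congr or_comm rfl rfl
  diagonal := fun i => by simp
  off_diagonal := fun i j h => by
    simp only [if_neg h]
    split <;> simp

/-- The Coxeter generators `aᵢ` of `Ãₙ`. -/
def aa (n : ℕ) (i : ZMod (n + 1)) : (affineA n).Group := (affineA n).simple i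

/-- The cyclic products `pⱼ = a_{j+1} a_{j+2} ⋯ a_{j-1}` (indices mod `n+1`). -/
def pp (n : ℕ) (j : ZMod (n + 1)) : (affineA n).Group :=
  ((List.range n).map fun k => aa n (j + 1 + (k : ℕ))).prod

/-- `gⱼ = pⱼ⁻¹ p_{j+1}`. -/
def gg (n : ℕ) (j : ZMod (n + 1)) : (affineA n).Group := (pp n j)⁻¹ * pp n (j + 1)

/-- The subgroup `N = ⟨pⱼ⁻¹pᵢ : i, j⟩` of `Ãₙ`. -/
def NN (n : ℕ) : Subgroup (affineA n).Group :=
  Subgroup.closure {x | ∃ i j : ZMod (n + 1), x = (pp n j)⁻¹ * pp n i}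

/-- The standard parabolic subgroup `⟨a₁,…,aₙ⟩` of `Ãₙ` (all generators except `a_{n+1} = a₀`). -/
def parab (n : ℕ) : Subgroup (affineA n).Group :=
  Subgroup.closure {x | ∃ i : ZMod (n + 1), i ≠ 0 ∧ x = aa n i}

/-! Write pⱼ = a_{j+1} a_{j+2} ⋯ a_{j+n} as a path of n consecutive generators around the cycle.
Two relations drive everything. Rotating the cycle gives pⱼ aⱼ = a_{j+1} p_{j+1}, both sides being
the product of all n+1 generators starting at a_{j+1}. For a generator strictly inside the path
(k ∉ {j, j+1}) one has a_k pⱼ = pⱼ a_{k-1}: a_k commutes past the letters before a_{k-1}, the braid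
relation turns a_k a_{k-1} a_k into a_{k-1} a_k a_{k-1}, and a_{k-1} commutes past the letters after
a_k. Each of the four relations is then a two-step computation with gⱼ = pⱼ⁻¹ p_{j+1}. -/

lemma ZMod.natCast_ne_zero_of_pos_of_lt {n m : ℕ} (h0 : 0 < m) (h : m < n + 1) :
    (m : ZMod (n + 1)) ≠ 0 :=
  (ZMod.natCast_eq_zero_iff m (n + 1)).not.mpr (Nat.not_dvd_of_pos_of_lt h0 h)

lemma ZMod.one_ne_zero_and_two_ne_zero_of_two_le {n : ℕ} (hn : 2 ≤ n) :
    (1 : ZMod (n + 1)) ≠ 0 ∧ (2 : ZMod (n + 1)) ≠ 0 :=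
  ⟨by exact_mod_cast ZMod.natCast_ne_zero_of_pos_of_lt (n := n) (m := 1) one_pos (by omega),
    by exact_mod_cast ZMod.natCast_ne_zero_of_pos_of_lt (n := n) (m := 2) two_pos (by omega)⟩

lemma ZMod.add_one_add_natCast_self {n : ℕ} (j : ZMod (n + 1)) :
    j + 1 + (n : ZMod (n + 1)) = j := by
  have h := ZMod.natCast_self (n + 1)
  push_cast at h
  linear_combination h

lemma affineA_M_eq_two {n : ℕ} {i j : ZMod (n + 1)} (h0 : i ≠ j) (h1 : i ≠ j + 1) (h2 : j ≠ i + 1) :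
    (affineA n).M i j = 2 := by
  simp [affineA, h0, h1, h2]

lemma affineA_M_add_one_eq_three {n : ℕ} {i : ZMod (n + 1)} (h : i ≠ i + 1) :
    (affineA n).M i (i + 1) = 3 := by
  simp [affineA, h]

lemma aa_braidWord_eq (n : ℕ) (i j : ZMod (n + 1)) :
    ((CoxeterSystem.alternatingWord i j ((affineA n).M i j)).map (aa n)).prod =
      ((CoxeterSystem.alternatingWord j i ((affineA n).M i j)).map (aa n)).prod := by
  have h := (affineA n).toCoxeterSystem.wordProd_braidWord_eq i j
  rwa [CoxeterSystem.braidWord, CoxeterSystem.braidWord, (affineA n).symmetric j i] at h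

lemma aa_mul_self (n : ℕ) (i : ZMod (n + 1)) : aa n i * aa n i = 1 :=
  (affineA n).toCoxeterSystem.simple_mul_simple_self i

lemma aa_inv (n : ℕ) (i : ZMod (n + 1)) : (aa n i)⁻¹ = aa n i :=
  (affineA n).toCoxeterSystem.inv_simple i

lemma aa_commute {n : ℕ} {i j : ZMod (n + 1)} (h0 : i ≠ j) (h1 : i ≠ j + 1) (h2 : j ≠ i + 1) :
    Commute (aa n i) (aa n j) := by
  have h := aa_braidWord_eq n i j
  simp only [affineA_M_eq_two h0 h1 h2, CoxeterSystem.alternatingWord, List.concat_eq_append,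
    List.nil_append, List.cons_append, List.map_cons, List.map_nil, List.prod_cons,
    List.prod_nil, mul_one] at h
  exact h

lemma aa_braid (n : ℕ) (i : ZMod (n + 1)) :
    aa n i * aa n (i + 1) * aa n i = aa n (i + 1) * aa n i * aa n (i + 1) := by
  by_cases h : i = i + 1
  · rw [← h]
  · simpa [affineA_M_add_one_eq_three h, CoxeterSystem.alternatingWord, mul_assoc]
      using (aa_braidWord_eq n i (i + 1)).symm

lemma aa_commute_add {n d : ℕ} (hd : 2 ≤ d) (hdn : d < n) (x : ZMod (n + 1)) :
    Commute (aa n x) (aa n (x + d)) := by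
  have hd0 := ZMod.natCast_ne_zero_of_pos_of_lt (n := n) (m := d) (by omega) (by omega)
  have hd1 := ZMod.natCast_ne_zero_of_pos_of_lt (n := n) (m := d + 1) (by omega) (by omega)
  have hd2 := ZMod.natCast_ne_zero_of_pos_of_lt (n := n) (m := d - 1) (by omega) (by omega)
  push_cast [Nat.cast_sub (by omega : 1 ≤ d)] at hd1 hd2
  refine aa_commute ?_ ?_ ?_ <;> intro h <;> grind

def aaProd (n : ℕ) (j : ZMod (n + 1)) (m : ℕ) : (affineA n).Group :=
  ((List.range m).map fun k => aa n (j + (k : ℕ))).prod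

lemma aaProd_succ (n : ℕ) (j : ZMod (n + 1)) (m : ℕ) :
    aaProd n j (m + 1) = aaProd n j m * aa n (j + m) := by
  simp [aaProd, List.range_succ]

lemma aaProd_succ' (n : ℕ) (j : ZMod (n + 1)) (m : ℕ) :
    aaProd n j (m + 1) = aa n j * aaProd n (j + 1) m := by
  simp [aaProd, List.range_succ_eq_map, Function.comp_def, add_assoc,
    add_comm (1 : ZMod (n + 1))]

lemma pp_eq_aaProd (n : ℕ) (j : ZMod (n + 1)) : pp n j = aaProd n (j + 1) n := rfl

lemma commute_aaProd {n m d : ℕ} (hmd : m < d) (hdn : d < n) (j : ZMod (n + 1)) :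
    Commute (aa n (j + d)) (aaProd n j m) := by
  induction m with
  | zero => exact Commute.one_right _
  | succ m ih =>
    rw [aaProd_succ]
    refine (ih (by omega)).mul_right ?_
    have h := aa_commute_add (n := n) (d := d - m) (by omega) (by omega) (j + m)
    rw [add_assoc, ← Nat.cast_add, Nat.add_sub_cancel' (by omega)] at h
    exact h.symm

lemma aa_mul_aaProd {n m d : ℕ} (hdm : d + 1 < m) (hmn : m ≤ n) (j : ZMod (n + 1)) :
    aa n (j + (d + 1 : ℕ)) * aaProd n j m = aaProd n j m * aa n (j + d) := by
  induction m with
  | zero => omega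
  | succ m ih =>
    rcases Nat.lt_or_ge (d + 1) m with hlt | hge
    · have hc := aa_commute_add (n := n) (d := m - d) (by omega) (by omega) (j + d)
      rw [add_assoc, ← Nat.cast_add, Nat.add_sub_cancel' (by omega)] at hc
      rw [aaProd_succ, ← mul_assoc, ih hlt (by omega), mul_assoc, hc.eq, mul_assoc]
    · obtain rfl : m = d + 1 := by omega
      have hc := commute_aaProd (m := d) (d := d + 1) (by omega) (by omega) j
      have hb := aa_braid n (j + d)
      rw [add_assoc, ← Nat.cast_add_one] at hb
      rw [aaProd_succ, aaProd_succ, ← mul_assoc, ← mul_assoc, hc.eq]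
      simp only [mul_assoc] at hb ⊢
      rw [hb]

lemma pp_mul_aa (n : ℕ) (j : ZMod (n + 1)) : pp n j * aa n j = aa n (j + 1) * pp n (j + 1) := by
  rw [pp_eq_aaProd, pp_eq_aaProd, ← aaProd_succ', aaProd_succ, ZMod.add_one_add_natCast_self]

lemma aa_mul_pp {n : ℕ} {k j : ZMod (n + 1)} (h0 : k ≠ j) (h1 : k ≠ j + 1) :
    aa n k * pp n j = pp n j * aa n (k - 1) := by
  obtain ⟨e, rfl, hlt⟩ : ∃ e : ℕ, k = j + 1 + e ∧ e < n + 1 :=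
    ⟨(k - (j + 1)).val, by rw [ZMod.natCast_zmod_val]; ring, ZMod.val_lt _⟩
  have hen : e ≠ n := by
    rintro rfl
    exact h0 (ZMod.add_one_add_natCast_self j)
  obtain ⟨d, rfl⟩ : ∃ d, e = d + 1 := Nat.exists_eq_add_one.mpr
    (Nat.pos_of_ne_zero fun h => h1 (by simp [h]))
  rw [pp_eq_aaProd, show j + 1 + ((d + 1 : ℕ) : ZMod (n + 1)) - 1 = j + 1 + d by push_cast; ring]
  exact aa_mul_aaProd (by omega) le_rfl (j + 1)

lemma aa_mul_pp_inv {n : ℕ} {k j : ZMod (n + 1)} (h0 : k ≠ j - 1) (h1 : k ≠ j) :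
    aa n k * (pp n j)⁻¹ = (pp n j)⁻¹ * aa n (k + 1) := by
  have h := aa_mul_pp (n := n) (k := k + 1) (j := j) (fun h => h0 (by linear_combination h))
    (fun h => h1 (by linear_combination h))
  rw [add_sub_cancel_right] at h
  rw [eq_inv_mul_iff_mul_eq, ← mul_assoc, ← h, mul_inv_cancel_right]

lemma commute_aa_gg {n : ℕ} {k j : ZMod (n + 1)} (h0 : k ≠ j - 1) (h1 : k ≠ j)
    (h2 : k ≠ j + 1) : Commute (aa n k) (gg n j) := by
  change aa n k * gg n j = gg n j * aa n k
  rw [gg, ← mul_assoc, aa_mul_pp_inv h0 h1, mul_assoc,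
    aa_mul_pp (by simpa using h1) (by simpa using h2), add_sub_cancel_right, mul_assoc]

lemma pp_add_one (n : ℕ) (j : ZMod (n + 1)) : pp n (j + 1) = aa n (j + 1) * pp n j * aa n j := by
  rw [mul_assoc, pp_mul_aa, ← mul_assoc, aa_mul_self, one_mul]

lemma aa_add_one_mul_pp (n : ℕ) (j : ZMod (n + 1)) :
    aa n (j + 1) * pp n j = pp n (j + 1) * aa n j := by
  rw [pp_add_one, mul_assoc, mul_assoc, aa_mul_self, mul_one]

lemma aa_mul_pp_add_one_inv (n : ℕ) (j : ZMod (n + 1)) :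
    aa n j * (pp n (j + 1))⁻¹ = (pp n j)⁻¹ * aa n (j + 1) := by
  rw [eq_inv_mul_iff_mul_eq, ← mul_assoc, pp_mul_aa, mul_inv_cancel_right]

lemma gg_mul_gg (n : ℕ) (j : ZMod (n + 1)) :
    gg n j * gg n (j + 1) = (pp n j)⁻¹ * pp n (j + 1 + 1) := by
  simp only [gg, mul_assoc, mul_inv_cancel_left]

lemma aa_mul_gg_self (n : ℕ) (i : ZMod (n + 1)) : aa n i * gg n i = (gg n i)⁻¹ * aa n i := by
  simp only [gg, pp_add_one, mul_inv_rev, inv_inv, aa_inv, mul_assoc]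

lemma aa_sub_one_mul_gg {n : ℕ} (hn : 2 ≤ n) (i : ZMod (n + 1)) :
    aa n (i - 1) * gg n i = gg n (i - 1) * gg n i * aa n (i - 1) := by
  obtain ⟨h1, h2⟩ := ZMod.one_ne_zero_and_two_ne_zero_of_two_le hn
  obtain ⟨j, rfl⟩ : ∃ j, i = j + 1 := ⟨i - 1, by ring⟩
  rw [add_sub_cancel_right, gg_mul_gg]
  calc aa n j * gg n (j + 1)
      = (pp n j)⁻¹ * (aa n (j + 1) * pp n (j + 1 + 1)) := by
        rw [gg, ← mul_assoc, aa_mul_pp_add_one_inv, mul_assoc]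
    _ = (pp n j)⁻¹ * pp n (j + 1 + 1) * aa n j := by
        rw [aa_mul_pp (fun h => h1 (by linear_combination -h))
          (fun h => h2 (by linear_combination -h)), add_sub_cancel_right, mul_assoc]

lemma aa_add_one_mul_gg {n : ℕ} (hn : 2 ≤ n) (i : ZMod (n + 1)) :
    aa n (i + 1) * gg n i = gg n i * gg n (i + 1) * aa n (i + 1) := by
  obtain ⟨h1, h2⟩ := ZMod.one_ne_zero_and_two_ne_zero_of_two_le hn
  rw [gg_mul_gg]
  calc aa n (i + 1) * gg n i
      = (pp n i)⁻¹ * (aa n (i + 1 + 1) * pp n (i + 1)) := by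
        rw [gg, ← mul_assoc, aa_mul_pp_inv (fun h => h2 (by linear_combination h))
          (fun h => h1 (by linear_combination h)), mul_assoc]
    _ = (pp n i)⁻¹ * pp n (i + 1 + 1) * aa n (i + 1) := by
        rw [aa_add_one_mul_pp, mul_assoc]

/-- Commutation relations between the generators `a_k` and the elements `gⱼ = pⱼ⁻¹p_{j+1}`. -/
theorem stmt11 (n : ℕ) (hn : 2 ≤ n) :
    (∀ k j : ZMod (n + 1), k ≠ j - 1 → k ≠ j → k ≠ j + 1 →
      aa n k * gg n j = gg n j * aa n k) ∧
    (∀ i : ZMod (n + 1), aa n (i - 1) * gg n i = gg n (i - 1) * gg n i * aa n (i - 1)) ∧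
    (∀ i : ZMod (n + 1), aa n i * gg n i = (gg n i)⁻¹ * aa n i) ∧
    (∀ i : ZMod (n + 1), aa n (i + 1) * gg n i = gg n i * gg n (i + 1) * aa n (i + 1)) :=
  ⟨fun _ _ h0 h1 h2 => (commute_aa_gg h0 h1 h2).eq, aa_sub_one_mul_gg hn, aa_mul_gg_self n,
    aa_add_one_mul_gg hn⟩
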